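/- Let A = {a,b,c,d} be a four-letter alphabet, m ≥ 4, and let x₁, x₂, y₁, y₂ ≥ 1 satisfy x₁ + x₂ = y₁ + y₂ = m - 3. Suppose x₁ ≤ x₂ and y₁ ≤ y₂ (one of the eight ordering cases). Then there exist positive integers p, q with p + q = m - 1, p ≤ x₂ + 1, q ≤ y₂ + 1, such that the two-sided infinite word of period 2(m-1) obtained by repeating a^p c^q b^p d^q avoids the partial words a⋄^{x₁}b⋄^{x₂}b and c⋄^{y₁}d⋄^{y₂}d, as well as all partial words of the form e⋄^{m-2}f where {e,f} ≠ {a,b} and {e,f} ≠ {c,d} with e ≤ f in the order a < b < c < d. -/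
import Mathlib


/-- The four-letter alphabet, ordered a < b < c < d. -/
inductive ABCD | a | b | c | d
deriving DecidableEq
open ABCD

/-- The linear order a < b < c < d via the rank function. -/
def rk : ABCD → ℕ
  | a => 0 | b => 1 | c => 2 | d => 3

abbrev PW (m : ℕ) (A : Type) := Fin m → Option A

def Meets {m : ℕ} {A : Type} (w : ℤ → A) (u : PW m A) : Prop :=
  ∃ i : ℤ, ∀ j : Fin m, ∀ x : A, u j = some x → w (i + (j : ℕ)) = x

def oneHole {A : Type} (m : ℕ) (x y : A) : PW m A :=
  fun j => if (j : ℕ) = 0 then some x else if (j : ℕ) = m - 1 then some y else none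

def twoDef {A : Type} (m : ℕ) (x e y : A) (p : ℕ) : PW m A :=
  fun j => if (j : ℕ) = 0 then some x else if (j : ℕ) = p then some e
    else if (j : ℕ) = m - 1 then some y else none

def periodic {A : Type} (P : ℕ) (f : ℕ → A) : ℤ → A :=
  fun i => f ((i % (P : ℤ)).toNat)

lemma periodic_shift {A : Type} (P : ℕ) (hP : 0 < P) (f : ℕ → A) (i : ℤ) (j : ℕ) :
    periodic P f (i + (j : ℕ)) = f (((i % (P:ℤ)).toNat + j) % P) := by
  unfold periodic
  congr 1
  have h1 : (0:ℤ) ≤ i % P := Int.emod_nonneg i (by exact_mod_cast hP.ne')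
  have h2 : i % P < P := Int.emod_lt_of_pos i (by exact_mod_cast hP)
  have key : (i + (j:ℤ)) % P = (((i % P).toNat + j : ℕ) : ℤ) % P := by
    push_cast
    rw [Int.toNat_of_nonneg h1]; conv_lhs => rw [Int.add_emod]
    conv_rhs => rw [Int.add_emod]
    rw [Int.emod_emod_of_dvd _ dvd_rfl]
  rw [key, ← Int.natCast_mod, Int.toNat_natCast]

lemma fchar {p q k : ℕ} {x : ABCD}
    (h : (if k < p then a else if k < p + q then c else if k < 2*p+q then b else d) = x) :
    (x = a ∧ k < p) ∨ (x = c ∧ p ≤ k ∧ k < p+q) ∨ (x = b ∧ p+q ≤ k ∧ k < 2*p+q) ∨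
      (x = d ∧ 2*p+q ≤ k) := by
  split_ifs at h <;> subst h
  · exact Or.inl ⟨rfl, by omega⟩
  · exact Or.inr <| Or.inl ⟨rfl, by omega⟩
  · exact Or.inr <| Or.inr <| Or.inl ⟨rfl, by omega⟩
  · exact Or.inr <| Or.inr <| Or.inr ⟨rfl, by omega⟩

/-- Over {a,b,c,d}, if x₁ ≤ x₂ and y₁ ≤ y₂, there exist p, q > 0 with p + q = m - 1,
p ≤ x₂+1, q ≤ y₂+1, such that the word repeating a^p c^q b^p d^q avoids
a⋄^(x₁)b⋄^(x₂)b, c⋄^(y₁)d⋄^(y₂)d, and every e⋄^(m-2)f with e ≤ f,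
{e,f} ≠ {a,b}, {e,f} ≠ {c,d}. -/
theorem stmt_12 (m x₁ x₂ y₁ y₂ : ℕ) (hm : 4 ≤ m)
    (hx₁ : 1 ≤ x₁) (hx₂ : 1 ≤ x₂) (hy₁ : 1 ≤ y₁) (hy₂ : 1 ≤ y₂)
    (hsx : x₁ + x₂ = m - 3) (hsy : y₁ + y₂ = m - 3)
    (hx : x₁ ≤ x₂) (hy : y₁ ≤ y₂) :
    ∃ p q : ℕ, 0 < p ∧ 0 < q ∧ p + q = m - 1 ∧ p ≤ x₂ + 1 ∧ q ≤ y₂ + 1 ∧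
      (¬ Meets (periodic (2 * (m - 1)) (fun n =>
          if n < p then a else if n < p + q then c
          else if n < 2 * p + q then b else d)) (twoDef m a b b (x₁ + 1))) ∧
      (¬ Meets (periodic (2 * (m - 1)) (fun n =>
          if n < p then a else if n < p + q then c
          else if n < 2 * p + q then b else d)) (twoDef m c d d (y₁ + 1))) ∧
      (∀ e f : ABCD, rk e ≤ rk f → ¬ (e = a ∧ f = b) → ¬ (e = c ∧ f = d) →
        ¬ Meets (periodic (2 * (m - 1)) (fun n =>
            if n < p then a else if n < p + q then c
            else if n < 2 * p + q then b else d)) (oneHole m e f)) := by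
  have hP : 0 < 2 * (m - 1) := by omega
  refine ⟨y₁ + 1, y₂ + 1, by omega, by omega, by omega, by omega, by omega, ?_, ?_, ?_⟩
  · rintro ⟨i, hmeet⟩
    have h0 := hmeet ⟨0, by omega⟩ a (by simp [twoDef])
    have h1 := hmeet ⟨x₁ + 1, by omega⟩ b (by simp [twoDef])
    rw [periodic_shift _ hP] at h0 h1
    simp only [Fin.val_mk] at h0 h1
    set n := (i % (((2*(m-1)):ℕ):ℤ)).toNat with hndef
    have hnP : n < 2*(m-1) := by
      have a1 : (0:ℤ) ≤ i % (((2*(m-1)):ℕ):ℤ) := Int.emod_nonneg _ (by exact_mod_cast hP.ne')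
      have a2 : i % (((2*(m-1)):ℕ):ℤ) < (((2*(m-1)):ℕ):ℤ) := Int.emod_lt_of_pos _ (by exact_mod_cast hP)
      omega
    rw [Nat.add_zero, Nat.mod_eq_of_lt hnP] at h0
    have c0 := fchar h0
    simp at c0
    rw [Nat.mod_eq_of_lt (by omega)] at h1
    have c1 := fchar h1
    simp at c1
    omega
  · rintro ⟨i, hmeet⟩
    have h0 := hmeet ⟨0, by omega⟩ c (by simp [twoDef])
    have h1 := hmeet ⟨y₁ + 1, by omega⟩ d (by simp [twoDef])
    rw [periodic_shift _ hP] at h0 h1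
    simp only [Fin.val_mk] at h0 h1
    set n := (i % (((2*(m-1)):ℕ):ℤ)).toNat with hndef
    have hnP : n < 2*(m-1) := by
      have a1 : (0:ℤ) ≤ i % (((2*(m-1)):ℕ):ℤ) := Int.emod_nonneg _ (by exact_mod_cast hP.ne')
      have a2 : i % (((2*(m-1)):ℕ):ℤ) < (((2*(m-1)):ℕ):ℤ) := Int.emod_lt_of_pos _ (by exact_mod_cast hP)
      omega
    rw [Nat.add_zero, Nat.mod_eq_of_lt hnP] at h0
    have c0 := fchar h0
    simp at c0
    rw [Nat.mod_eq_of_lt (by omega)] at h1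
    have c1 := fchar h1
    simp at c1
    omega
  · rintro e f hrk hab hcd ⟨i, hmeet⟩
    have h0 := hmeet ⟨0, by omega⟩ e (by simp [oneHole])
    have h1 := hmeet ⟨m - 1, by omega⟩ f
      (by have hm1 : m - 1 ≠ 0 := (by omega); simp [oneHole, hm1])
    rw [periodic_shift _ hP] at h0 h1
    simp only [Fin.val_mk] at h0 h1
    set n := (i % (((2*(m-1)):ℕ):ℤ)).toNat with hndef
    have hnP : n < 2*(m-1) := by
      have a1 : (0:ℤ) ≤ i % (((2*(m-1)):ℕ):ℤ) := Int.emod_nonneg _ (by exact_mod_cast hP.ne')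
      have a2 : i % (((2*(m-1)):ℕ):ℤ) < (((2*(m-1)):ℕ):ℤ) := Int.emod_lt_of_pos _ (by exact_mod_cast hP)
      omega
    rw [Nat.add_zero, Nat.mod_eq_of_lt hnP] at h0
    set k := (n + (m-1)) % (2*(m-1)) with hkdef
    have hkP : k < 2*(m-1) := Nat.mod_lt _ hP
    have hk : k = n + (m-1) ∨ k + (m-1) = n := by
      by_cases hc : n + (m-1) < 2*(m-1)
      · left; rw [hkdef]; exact Nat.mod_eq_of_lt hc
      · right
        have h3 : (n + (m-1)) % (2*(m-1)) = n + (m-1) - 2*(m-1) := by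
          rw [Nat.mod_eq_sub_mod (le_of_not_gt hc), Nat.mod_eq_of_lt (by omega)]
        omega
    have c0 := fchar h0
    have c1 := fchar h1
    rcases e <;> rcases f <;>
      first
        | exact hab ⟨rfl, rfl⟩
        | exact hcd ⟨rfl, rfl⟩
        | exact absurd hrk (by decide)
        | (simp at c0 c1; rcases hk with hk | hk <;> omega)
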